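/- arXiv:2506.07346 — 5 statements merged into one kernel-verified Lean document; each statement's English description precedes it below -/
import Mathlib

section
/- For every integer N ≥ 1, every real number s, and every real t > 0, one has (1 − t²(1 + 2 t^N s²)/(1 + 2 s²)) − ((1 − t^(N+2))/(N + 2)) · (2 + 2N s²/(1 + 2 s²)) ≥ 0, with equality when t = 1. (This is the nonnegativity of the integrand A(t,v) from the paper's Lemma on A, after factoring out the nonnegative quantity (1/2)|∇v(x)|² and writing s = f(v(x)).) -/
lemma key_aux (n : ℕ) (t : ℝ) (ht : 0 < t) :
    ((n : ℝ) + 2) * (t ^ 2 - 1) ≤ 2 * (t ^ (n + 2) - 1) := by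
  induction n with
  | zero => norm_num
  | succ m ih =>
    have h : t ^ (m + 1 + 2) = t * t ^ (m + 2) := by ring
    push_cast
    rw [h]
    nlinarith [sq_nonneg (t - 1), mul_pos ht ht, sq_nonneg t,
      mul_nonneg (sq_nonneg (t-1)) (Nat.cast_nonneg (α := ℝ) m)]

/-- Nonnegativity of the integrand `A(t,v)` (after factoring out `(1/2)|∇v|²`,
with `s = f(v(x))`), together with equality at `t = 1`. -/
theorem stmt_0 (N : ℕ) (hN : 1 ≤ N) (s : ℝ) :
    (∀ t : ℝ, 0 < t →
      0 ≤ (1 - t ^ 2 * (1 + 2 * t ^ N * s ^ 2) / (1 + 2 * s ^ 2))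
          - ((1 - t ^ (N + 2)) / ((N : ℝ) + 2)) * (2 + 2 * (N : ℝ) * s ^ 2 / (1 + 2 * s ^ 2)))
    ∧ (1 - (1 : ℝ) ^ 2 * (1 + 2 * (1 : ℝ) ^ N * s ^ 2) / (1 + 2 * s ^ 2))
          - ((1 - (1 : ℝ) ^ (N + 2)) / ((N : ℝ) + 2)) * (2 + 2 * (N : ℝ) * s ^ 2 / (1 + 2 * s ^ 2))
        = 0 := by
  have hd : (0 : ℝ) < 1 + 2 * s ^ 2 := by positivity
  have hNpos : (0 : ℝ) < (N : ℝ) + 2 := by positivity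
  constructor
  · intro t ht
    have hkey := key_aux N t ht
    have heq : (1 - t ^ 2 * (1 + 2 * t ^ N * s ^ 2) / (1 + 2 * s ^ 2))
          - ((1 - t ^ (N + 2)) / ((N : ℝ) + 2)) * (2 + 2 * (N : ℝ) * s ^ 2 / (1 + 2 * s ^ 2))
        = (2 * (t ^ (N + 2) - 1) - ((N : ℝ) + 2) * (t ^ 2 - 1)) / ((1 + 2 * s ^ 2) * ((N : ℝ) + 2)) := by
      have hpow : t ^ (N + 2) = t ^ N * t ^ 2 := by rw [pow_add]
      field_simp
      rw [hpow]
      ring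
    rw [heq]
    apply div_nonneg (by linarith) (by positivity)
  · have h1 : (1 : ℝ) ^ N = 1 := one_pow N
    have h2 : (1 : ℝ) ^ (N + 2) = 1 := one_pow _
    rw [h1, h2]
    field_simp
    ring
end

section
/- Let N ≥ 1 be an integer, let h : ℝ → ℝ be continuous, and let H(t) = ∫_0^t h(τ) dτ. Assume (h3): the map t ↦ (h(t)t − 2H(t)) / (|t|^(3+4/N) t) is nondecreasing on (−∞,0) and on (0,+∞). Then for every s ∈ ℝ and every t > 0, −H(s) + t^(−N) H(t^(N/2) s) + (N(1 − t^(N+2))/(2(N + 2))) · (h(s)s − 2H(s)) ≥ 0, with equality when t = 1. -/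
/-- Nonnegativity of the integrand `B(t,v)` (with `s = f(v(x))`) under the
monotonicity condition (h3), together with equality at `t = 1`. -/
theorem stmt_1 (N : ℕ) (hN : 1 ≤ N) (h H : ℝ → ℝ) (hcont : Continuous h)
    (hH : ∀ t : ℝ, H t = ∫ τ in (0:ℝ)..t, h τ)
    (h3neg : MonotoneOn (fun t : ℝ => (h t * t - 2 * H t) / (|t| ^ ((3:ℝ) + 4 / (N:ℝ)) * t))
      (Set.Iio 0))
    (h3pos : MonotoneOn (fun t : ℝ => (h t * t - 2 * H t) / (|t| ^ ((3:ℝ) + 4 / (N:ℝ)) * t))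
      (Set.Ioi 0)) :
    (∀ s : ℝ, ∀ t : ℝ, 0 < t →
      0 ≤ -H s + t ^ (-(N:ℝ)) * H (t ^ ((N:ℝ) / 2) * s)
          + ((N:ℝ) * (1 - t ^ (N + 2)) / (2 * ((N:ℝ) + 2))) * (h s * s - 2 * H s))
    ∧ (∀ s : ℝ,
      -H s + (1:ℝ) ^ (-(N:ℝ)) * H ((1:ℝ) ^ ((N:ℝ) / 2) * s)
          + ((N:ℝ) * (1 - (1:ℝ) ^ (N + 2)) / (2 * ((N:ℝ) + 2))) * (h s * s - 2 * H s) = 0) := by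
  have hN0 : (0:ℝ) < N := by exact_mod_cast hN
  set φ : ℝ → ℝ := fun t : ℝ =>
      (h t * t - 2 * H t) / (|t| ^ ((3:ℝ) + 4 / (N:ℝ)) * t) with hφ
  have hHd : ∀ x : ℝ, HasDerivAt H (h x) x := by
    intro x
    have h0 : HasDerivAt (fun u : ℝ => ∫ τ in (0:ℝ)..u, h τ) (h x) x :=
      intervalIntegral.integral_hasDerivAt_right (hcont.intervalIntegrable _ _)
        (hcont.stronglyMeasurableAtFilter _ _) hcont.continuousAt
    exact h0.congr_of_eventuallyEq (Filter.Eventually.of_forall hH)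
  constructor
  · intro s t ht
    set B : ℝ → ℝ := fun t : ℝ => -H s + t ^ (-(N:ℝ)) * H (t ^ ((N:ℝ) / 2) * s)
        + ((N:ℝ) * (1 - t ^ (N + 2)) / (2 * ((N:ℝ) + 2))) * (h s * s - 2 * H s) with hBdef
    show 0 ≤ B t
    -- derivative of B at any x > 0
    have hderiv : ∀ x : ℝ, 0 < x → HasDerivAt B
        ((N:ℝ)/2 * x ^ (-(N:ℝ) - 1) *
            (h (x ^ ((N:ℝ)/2) * s) * (x ^ ((N:ℝ)/2) * s) - 2 * H (x ^ ((N:ℝ)/2) * s))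
          - (N:ℝ)/2 * x ^ (N + 1) * (h s * s - 2 * H s)) x := by
      intro x hx
      have h1 : HasDerivAt (fun x : ℝ => x ^ (-(N:ℝ))) (-(N:ℝ) * x ^ (-(N:ℝ) - 1)) x :=
        Real.hasDerivAt_rpow_const (Or.inl hx.ne')
      have h2 : HasDerivAt (fun x : ℝ => x ^ ((N:ℝ)/2) * s)
          (((N:ℝ)/2 * x ^ ((N:ℝ)/2 - 1)) * s) x :=
        (Real.hasDerivAt_rpow_const (Or.inl hx.ne')).mul_const s
      have h3 : HasDerivAt (fun x : ℝ => H (x ^ ((N:ℝ)/2) * s))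
          (h (x ^ ((N:ℝ)/2) * s) * (((N:ℝ)/2 * x ^ ((N:ℝ)/2 - 1)) * s)) x :=
        (hHd _).comp x h2
      have h4 := h1.mul h3
      have h5 := ((((hasDerivAt_pow (N+2) x).const_sub 1).const_mul (N:ℝ)).div_const
          (2*((N:ℝ)+2))).mul_const (h s * s - 2 * H s)
      have hB := (h4.const_add (-H s)).add h5
      convert hB using 1
      case e'_4 => rfl
      case e'_5 => rfl
      case e'_8 => rfl
      have key : x ^ (-(N:ℝ)) * x ^ ((N:ℝ)/2 - 1) = x ^ (-(N:ℝ)-1) * x ^ ((N:ℝ)/2) := by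
        rw [← Real.rpow_add hx, ← Real.rpow_add hx]; ring_nf
      have hcast : ((N+2 : ℕ) : ℝ) = (N:ℝ) + 2 := by push_cast; ring
      have hne : (N:ℝ) + 2 ≠ 0 := by positivity
      have hnat : N + 2 - 1 = N + 1 := rfl
      have hD : (N:ℝ) * -(((N:ℝ)+2) * x^(N+1)) / (2*((N:ℝ)+2)) = -(N:ℝ)/2 * x^(N+1) := by
        field_simp
      simp only [hnat, hcast]
      rw [hD]
      linear_combination (-(N:ℝ)/2 * s * h (x ^ ((N:ℝ)/2) * s)) * key
    have hB1 : B 1 = 0 := by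
      simp [hBdef, Real.one_rpow, one_pow]
    by_cases hs : s = 0
    · subst hs
      have hH0 : H 0 = 0 := by rw [hH]; simp
      simp [hBdef, hH0]
    · -- s ≠ 0 : rewrite the derivative using φ
      set C : ℝ := |s| ^ ((3:ℝ) + 4 / (N:ℝ)) * s with hC
      have hCne : C ≠ 0 := by
        rcases lt_or_gt_of_ne hs with hs' | hs'
        · exact (mul_neg_of_pos_of_neg (Real.rpow_pos_of_pos (abs_pos.2 hs) _) hs').ne
        · exact (mul_pos (Real.rpow_pos_of_pos (abs_pos.2 hs) _) hs').ne'
      have hEs : h s * s - 2 * H s = φ s * C := by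
        rw [hφ, hC]
        exact (div_mul_cancel₀ _ (by
          rcases lt_or_gt_of_ne hs with hs' | hs'
          · exact (mul_neg_of_pos_of_neg (Real.rpow_pos_of_pos (abs_pos.2 hs) _) hs').ne
          · exact (mul_pos (Real.rpow_pos_of_pos (abs_pos.2 hs) _) hs').ne')).symm
      have hderiv' : ∀ x : ℝ, 0 < x → HasDerivAt B
          ((N:ℝ)/2 * x ^ (N + 1) * (C * (φ (x ^ ((N:ℝ)/2) * s) - φ s))) x := by
        intro x hx
        have hd := hderiv x hx
        have hxp : (0:ℝ) < x ^ ((N:ℝ)/2) := Real.rpow_pos_of_pos hx _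
        set u : ℝ := x ^ ((N:ℝ)/2) * s with hu
        have hune : u ≠ 0 := mul_ne_zero hxp.ne' hs
        have huabs : |u| = x ^ ((N:ℝ)/2) * |s| := by
          rw [hu, abs_mul, abs_of_pos hxp]
        have hupow : |u| ^ ((3:ℝ) + 4 / (N:ℝ)) * u = x ^ ((2:ℝ)*(N:ℝ) + 2) * C := by
          rw [huabs, Real.mul_rpow hxp.le (abs_nonneg s), ← Real.rpow_mul hx.le]
          have e1 : (2:ℝ)*(N:ℝ) + 2 = (N:ℝ)/2 * ((3:ℝ) + 4/(N:ℝ)) + (N:ℝ)/2 := by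
            field_simp; ring
          rw [e1, Real.rpow_add hx, hC, hu]
          ring
        have hune' : |u| ^ ((3:ℝ) + 4 / (N:ℝ)) * u ≠ 0 :=
          mul_ne_zero (Real.rpow_pos_of_pos (abs_pos.2 hune) _).ne' hune
        have hEu : h u * u - 2 * H u = φ u * (x ^ ((2:ℝ)*(N:ℝ) + 2) * C) := by
          rw [← hupow, hφ]
          exact (div_mul_cancel₀ _ hune').symm
        have hxkey : x ^ (-(N:ℝ) - 1) * x ^ ((2:ℝ)*(N:ℝ) + 2) = x ^ (N + 1) := by
          rw [← Real.rpow_add hx,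
            show (-(N:ℝ) - 1) + ((2:ℝ)*(N:ℝ) + 2) = ((N + 1 : ℕ) : ℝ) by push_cast; ring,
            Real.rpow_natCast]
        have : (N:ℝ)/2 * x ^ (-(N:ℝ) - 1) * (h u * u - 2 * H u)
            - (N:ℝ)/2 * x ^ (N + 1) * (h s * s - 2 * H s)
            = (N:ℝ)/2 * x ^ (N + 1) * (C * (φ u - φ s)) := by
          rw [hEu, hEs]
          linear_combination ((N:ℝ)/2 * φ u * C) * hxkey
        rw [← this]
        exact hd
      -- sign of C * (φ u - φ s)
      have hsign_ge : ∀ x : ℝ, 0 < x → 1 ≤ x → 0 ≤ C * (φ (x ^ ((N:ℝ)/2) * s) - φ s) := by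
        intro x hx hx1
        have hp : 1 ≤ x ^ ((N:ℝ)/2) := by
          calc (1:ℝ) = 1 ^ ((N:ℝ)/2) := (Real.one_rpow _).symm
          _ ≤ x ^ ((N:ℝ)/2) := Real.rpow_le_rpow zero_le_one hx1 (by positivity)
        rcases lt_or_gt_of_ne hs with hs' | hs'
        · -- s < 0
          have hu0 : x ^ ((N:ℝ)/2) * s < 0 :=
            mul_neg_of_pos_of_neg (Real.rpow_pos_of_pos hx _) hs'
          have hle : x ^ ((N:ℝ)/2) * s ≤ s := by
            calc x ^ ((N:ℝ)/2) * s ≤ 1 * s := mul_le_mul_of_nonpos_right hp hs'.le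
            _ = s := one_mul s
          have := h3neg hu0 hs' hle
          have hCneg : C < 0 :=
            mul_neg_of_pos_of_neg (Real.rpow_pos_of_pos (abs_pos.2 hs) _) hs'
          nlinarith [sub_nonpos.2 this, hCneg.le]
        · -- s > 0
          have hu0 : (0:ℝ) < x ^ ((N:ℝ)/2) * s :=
            mul_pos (Real.rpow_pos_of_pos hx _) hs'
          have hle : s ≤ x ^ ((N:ℝ)/2) * s := le_mul_of_one_le_left hs'.le hp
          have := h3pos hs' hu0 hle
          have hCpos : 0 < C :=
            mul_pos (Real.rpow_pos_of_pos (abs_pos.2 hs) _) hs'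
          exact mul_nonneg hCpos.le (sub_nonneg.2 this)
      have hsign_le : ∀ x : ℝ, 0 < x → x ≤ 1 → C * (φ (x ^ ((N:ℝ)/2) * s) - φ s) ≤ 0 := by
        intro x hx hx1
        have hp : x ^ ((N:ℝ)/2) ≤ 1 := Real.rpow_le_one hx.le hx1 (by positivity)
        rcases lt_or_gt_of_ne hs with hs' | hs'
        · have hu0 : x ^ ((N:ℝ)/2) * s < 0 :=
            mul_neg_of_pos_of_neg (Real.rpow_pos_of_pos hx _) hs'
          have hle : s ≤ x ^ ((N:ℝ)/2) * s := by
            calc s = 1 * s := (one_mul s).symm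
            _ ≤ x ^ ((N:ℝ)/2) * s := mul_le_mul_of_nonpos_right hp hs'.le
          have := h3neg hs' hu0 hle
          have hCneg : C < 0 :=
            mul_neg_of_pos_of_neg (Real.rpow_pos_of_pos (abs_pos.2 hs) _) hs'
          exact mul_nonpos_of_nonpos_of_nonneg hCneg.le (sub_nonneg.2 this)
        · have hu0 : (0:ℝ) < x ^ ((N:ℝ)/2) * s :=
            mul_pos (Real.rpow_pos_of_pos hx _) hs'
          have hle : x ^ ((N:ℝ)/2) * s ≤ s := by
            calc x ^ ((N:ℝ)/2) * s ≤ 1 * s :=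
              mul_le_mul_of_nonneg_right hp hs'.le
            _ = s := one_mul s
          have := h3pos hu0 hs' hle
          have hCpos : 0 < C :=
            mul_pos (Real.rpow_pos_of_pos (abs_pos.2 hs) _) hs'
          exact mul_nonpos_of_nonneg_of_nonpos hCpos.le (sub_nonpos.2 this)
      rcases le_total 1 t with h1t | ht1
      · -- t ≥ 1 : B monotone on [1, ∞)
        have hmono : MonotoneOn B (Set.Ici 1) := by
          apply monotoneOn_of_deriv_nonneg (convex_Ici 1)
          · intro x hx
            exact (hderiv' x (lt_of_lt_of_le one_pos hx)).continuousAt.continuousWithinAt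
          · intro x hx
            rw [interior_Ici] at hx
            exact (hderiv' x (lt_trans one_pos hx)).differentiableAt.differentiableWithinAt
          · intro x hx
            rw [interior_Ici] at hx
            have hx0 : (0:ℝ) < x := lt_trans one_pos hx
            rw [(hderiv' x hx0).deriv]
            have := hsign_ge x hx0 hx.le
            positivity
        have := hmono (Set.self_mem_Ici) h1t h1t
        rwa [hB1] at this
      · -- 0 < t ≤ 1 : B antitone on [t, 1]
        have hanti : AntitoneOn B (Set.Icc t 1) := by
          apply antitoneOn_of_deriv_nonpos (convex_Icc t 1)
          · intro x hx
            exact (hderiv' x (lt_of_lt_of_le ht hx.1)).continuousAt.continuousWithinAt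
          · intro x hx
            rw [interior_Icc] at hx
            exact (hderiv' x (lt_trans ht hx.1)).differentiableAt.differentiableWithinAt
          · intro x hx
            rw [interior_Icc] at hx
            have hx0 : (0:ℝ) < x := lt_trans ht hx.1
            rw [(hderiv' x hx0).deriv]
            have h1 := hsign_le x hx0 hx.2.le
            have h2 : (0:ℝ) ≤ (N:ℝ)/2 * x ^ (N + 1) := by positivity
            exact mul_nonpos_of_nonneg_of_nonpos h2 h1
        have := hanti (Set.left_mem_Icc.2 ht1) (Set.right_mem_Icc.2 ht1) ht1
        rwa [hB1] at this
  · intro s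
    simp [Real.one_rpow, one_pow]
end

section
/- Let N ≥ 1 be an integer, let v : ℝ^N → ℝ be differentiable, and let t > 0. Then the stretched function v_t(x) := f⁻¹(t^(N/2) f(v(tx))) is differentiable, and for every x ∈ ℝ^N its gradient satisfies |∇v_t(x)|² = t^(N+2) · ((1 + 2 t^N f(v(tx))²)/(1 + 2 f(v(tx))²)) · |∇v(tx)|². -/
open MeasureTheory

/-- `g(s) = ∫_0^s √(1 + 2τ²) dτ`, the inverse of the dual function `f`. -/
noncomputable def g (s : ℝ) : ℝ := ∫ τ in (0:ℝ)..s, Real.sqrt (1 + 2 * τ ^ 2)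

/-- The dual function `f = g⁻¹`. -/
noncomputable def f : ℝ → ℝ := Function.invFun g

lemma sq_pos' (s : ℝ) : (0:ℝ) < 1 + 2 * s ^ 2 := by positivity

lemma g_cont_integrand : Continuous fun τ : ℝ => Real.sqrt (1 + 2 * τ ^ 2) := by
  fun_prop

lemma g_hasDerivAt (s : ℝ) : HasDerivAt g (Real.sqrt (1 + 2 * s ^ 2)) s :=
  (g_cont_integrand.integral_hasStrictDerivAt 0 s).hasDerivAt

lemma g_strictMono : StrictMono g := by
  apply strictMono_of_deriv_pos
  intro s
  rw [(g_hasDerivAt s).deriv]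
  exact Real.sqrt_pos.2 (sq_pos' s)

lemma g_ge (s : ℝ) (hs : 0 ≤ s) : s ≤ g s := by
  have h1 : (∫ τ in (0:ℝ)..s, (1:ℝ)) ≤ g s := by
    apply intervalIntegral.integral_mono_on hs
    · exact intervalIntegrable_const
    · exact (g_cont_integrand).intervalIntegrable 0 s
    · intro x _
      have := Real.sqrt_le_sqrt (show (1:ℝ) ≤ 1 + 2*x^2 by nlinarith)
      simpa using this
  simpa using h1

lemma g_le (s : ℝ) (hs : s ≤ 0) : g s ≤ s := by
  have h1 : (∫ τ in s..(0:ℝ), (1:ℝ)) ≤ ∫ τ in s..(0:ℝ), Real.sqrt (1 + 2 * τ ^ 2) := by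
    apply intervalIntegral.integral_mono_on hs
    · exact intervalIntegrable_const
    · exact (g_cont_integrand).intervalIntegrable s 0
    · intro x _
      have := Real.sqrt_le_sqrt (show (1:ℝ) ≤ 1 + 2*x^2 by nlinarith)
      simpa using this
  have h2 : g s = -∫ τ in s..(0:ℝ), Real.sqrt (1 + 2 * τ ^ 2) := by
    rw [g, intervalIntegral.integral_symm]
  simp only [intervalIntegral.integral_const, smul_eq_mul, mul_one] at h1
  linarith

lemma g_surj : Function.Surjective g := by
  apply Continuous.surjective
  · exact Differentiable.continuous (fun s => (g_hasDerivAt s).differentiableAt)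
  · exact Filter.tendsto_atTop_mono' _ (Filter.eventually_atTop.2 ⟨0, fun s hs => g_ge s hs⟩)
      Filter.tendsto_id
  · apply Filter.tendsto_atBot_mono' _ (Filter.eventually_atBot.2 ⟨0, fun s hs => g_le s hs⟩)
      Filter.tendsto_id

lemma f_g (s : ℝ) : f (g s) = s :=
  Function.leftInverse_invFun g_strictMono.injective s

lemma g_f (y : ℝ) : g (f y) = y :=
  Function.rightInverse_invFun g_surj y

lemma f_eq_symm : f = ⇑(StrictMono.orderIsoOfSurjective g g_strictMono g_surj).symm := by
  funext y
  apply g_strictMono.injective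
  rw [g_f]
  have h := (StrictMono.orderIsoOfSurjective g g_strictMono g_surj).apply_symm_apply y
  have h2 := congrFun (StrictMono.coe_orderIsoOfSurjective g g_strictMono g_surj)
    ((StrictMono.orderIsoOfSurjective g g_strictMono g_surj).symm y)
  rw [h2] at h
  exact h.symm

lemma f_continuous : Continuous f := by
  rw [f_eq_symm]
  exact ((StrictMono.orderIsoOfSurjective g g_strictMono g_surj).symm.toHomeomorph).continuous

lemma f_hasDerivAt (y : ℝ) :
    HasDerivAt f (Real.sqrt (1 + 2 * (f y) ^ 2))⁻¹ y := by
  apply HasDerivAt.of_local_left_inverse (f_continuous.continuousAt)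
    (g_hasDerivAt (f y)) (ne_of_gt (Real.sqrt_pos.2 (sq_pos' _)))
  exact Filter.Eventually.of_forall g_f

lemma f_injective : Function.Injective f := by
  intro a b h
  have := congrArg g h
  rwa [g_f, g_f] at this

lemma invFun_f_eq (x : ℝ) : Function.invFun f x = g x := by
  apply f_injective
  rw [f_g]
  exact Function.invFun_eq ⟨g x, f_g x⟩

/-- The mass-preserving stretching `v_t(x) = f⁻¹(t^{N/2} f(v(tx)))`. -/
noncomputable def stretch {N : ℕ} (t : ℝ) (v : EuclideanSpace ℝ (Fin N) → ℝ) :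
    EuclideanSpace ℝ (Fin N) → ℝ :=
  fun x => Function.invFun f (t ^ ((N:ℝ) / 2) * f (v (t • x)))

lemma stretch_eq {N : ℕ} (t : ℝ) (v : EuclideanSpace ℝ (Fin N) → ℝ) :
    stretch t v = fun x => g (t ^ ((N:ℝ) / 2) * f (v (t • x))) := by
  funext x
  rw [stretch, invFun_f_eq]

lemma sq_helper (a b d : ℝ) : (|a| * (|b| * d)) ^ 2 = a ^ 2 * (b ^ 2 * d ^ 2) := by
  rw [mul_pow, mul_pow, sq_abs, sq_abs]

lemma sq_helper2 (X c Y : ℝ) : (X * (c * Y)) ^ 2 = X ^ 2 * (c ^ 2 * Y ^ 2) := by ring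

lemma norm_gradient_eq {N : ℕ} (u : EuclideanSpace ℝ (Fin N) → ℝ) (x : EuclideanSpace ℝ (Fin N)) :
    ‖gradient u x‖ = ‖fderiv ℝ u x‖ := by
  rw [gradient]
  exact LinearIsometryEquiv.norm_map _ _

/-- Differentiability of the stretched function and the formula for the square
of its gradient. -/
theorem stmt_3 (N : ℕ) (hN : 1 ≤ N) (v : EuclideanSpace ℝ (Fin N) → ℝ)
    (hv : Differentiable ℝ v) (t : ℝ) (ht : 0 < t) :
    Differentiable ℝ (stretch t v)
    ∧ ∀ x : EuclideanSpace ℝ (Fin N),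
        ‖gradient (stretch t v) x‖ ^ 2
          = t ^ (N + 2) * ((1 + 2 * t ^ N * (f (v (t • x))) ^ 2)
              / (1 + 2 * (f (v (t • x))) ^ 2)) * ‖gradient v (t • x)‖ ^ 2 := by
  set c : ℝ := t ^ ((N:ℝ) / 2) with hc
  have hc2 : c ^ 2 = t ^ N := by
    rw [hc, ← Real.rpow_natCast (t ^ ((N:ℝ)/2)) 2, ← Real.rpow_mul ht.le]
    rw [show (N:ℝ)/2 * (2:ℕ) = (N:ℝ) by push_cast; ring]
    exact Real.rpow_natCast t N
  have key : ∀ x : EuclideanSpace ℝ (Fin N),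
      HasFDerivAt (stretch t v)
        ((Real.sqrt (1 + 2 * (c * f (v (t • x))) ^ 2)
            * (c * (Real.sqrt (1 + 2 * (f (v (t • x))) ^ 2))⁻¹))
          • (t • fderiv ℝ v (t • x))) x := by
    intro x
    have hL : HasFDerivAt (fun y : EuclideanSpace ℝ (Fin N) => t • y)
        (t • ContinuousLinearMap.id ℝ (EuclideanSpace ℝ (Fin N))) x :=
      (t • ContinuousLinearMap.id ℝ (EuclideanSpace ℝ (Fin N))).hasFDerivAt
    have hF : HasFDerivAt (fun y : EuclideanSpace ℝ (Fin N) => v (t • y))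
        (t • fderiv ℝ v (t • x)) x := by
      have := ((hv (t • x)).hasFDerivAt).comp x hL
      simpa [Function.comp_def] using this
    have hder : HasDerivAt (fun s : ℝ => g (c * f s))
        (Real.sqrt (1 + 2 * (c * f (v (t • x))) ^ 2)
          * (c * (Real.sqrt (1 + 2 * (f (v (t • x))) ^ 2))⁻¹)) (v (t • x)) := by
      have := (g_hasDerivAt (c * f (v (t • x)))).comp (v (t • x))
        ((f_hasDerivAt (v (t • x))).const_mul c)
      exact this
    rw [stretch_eq]
    exact hder.comp_hasFDerivAt x hF
  refine ⟨fun x => (key x).differentiableAt, fun x => ?_⟩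
  have hB0 : (0:ℝ) < 1 + 2 * (f (v (t • x))) ^ 2 := sq_pos' _
  have hA0 : (0:ℝ) ≤ 1 + 2 * (c * f (v (t • x))) ^ 2 := (sq_pos' _).le
  have hgrad : ‖gradient (stretch t v) x‖ ^ 2
      = (Real.sqrt (1 + 2 * (c * f (v (t • x))) ^ 2)
          * (c * (Real.sqrt (1 + 2 * (f (v (t • x))) ^ 2))⁻¹)) ^ 2
        * (t ^ 2 * ‖fderiv ℝ v (t • x)‖ ^ 2) := by
    rw [norm_gradient_eq, (key x).fderiv, norm_smul, norm_smul,
      Real.norm_eq_abs, Real.norm_eq_abs]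
    exact sq_helper _ _ _
  have expand : (Real.sqrt (1 + 2 * (c * f (v (t • x))) ^ 2)
        * (c * (Real.sqrt (1 + 2 * (f (v (t • x))) ^ 2))⁻¹)) ^ 2
      = (1 + 2 * t ^ N * (f (v (t • x))) ^ 2)
        * ((1 + 2 * (f (v (t • x))) ^ 2)⁻¹ * t ^ N) := by
    rw [sq_helper2, Real.sq_sqrt hA0, inv_pow, Real.sq_sqrt hB0.le]
    rw [show (c * f (v (t • x))) ^ 2 = t ^ N * (f (v (t • x))) ^ 2 by
      rw [mul_pow, hc2], hc2]
    ring
  rw [hgrad, expand, norm_gradient_eq v (t • x)]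
  have ht2 : t ^ (N + 2) = t ^ N * t ^ 2 := pow_add t N 2
  field_simp [hB0.ne']
  ring
end

section
/- Let h : ℝ → ℝ be continuous with H(t) = ∫_0^t h(τ) dτ, and suppose there are real numbers 0 < μ₁ ≤ μ₂ such that 0 < μ₁ H(t) ≤ h(t)t ≤ μ₂ H(t) for all t ≠ 0. Then for every s ∈ ℝ and every t ∈ [0,1], t^(μ₂) H(s) ≤ H(ts) ≤ t^(μ₁) H(s), while for every t ≥ 1, t^(μ₁) H(s) ≤ H(ts) ≤ t^(μ₂) H(s). -/
open intervalIntegral MeasureTheory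

private lemma stmt_11_hasDerivAt (h H : ℝ → ℝ) (hcont : Continuous h)
    (hH : ∀ t : ℝ, H t = ∫ τ in (0:ℝ)..t, h τ) (x : ℝ) :
    HasDerivAt H (h x) x := by
  have hfun : H = fun u => ∫ τ in (0:ℝ)..u, h τ := funext hH
  rw [hfun]
  exact integral_hasDerivAt_right (hcont.intervalIntegrable 0 x)
    (hcont.stronglyMeasurableAtFilter volume (nhds x)) hcont.continuousAt

private lemma stmt_11_mono (h H : ℝ → ℝ) (hcont : Continuous h)
    (hH : ∀ t : ℝ, H t = ∫ τ in (0:ℝ)..t, h τ)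
    (s : ℝ) (hs : s ≠ 0) (μ : ℝ) (hμ : 0 < μ)
    (hb : ∀ t : ℝ, t ≠ 0 → μ * H t ≤ h t * t) :
    MonotoneOn (fun t => H (t * s) * t ^ (-μ)) (Set.Ioi (0:ℝ)) := by
  have hint : interior (Set.Ioi (0:ℝ)) = Set.Ioi 0 := interior_Ioi
  have key : ∀ t ∈ interior (Set.Ioi (0:ℝ)),
      HasDerivWithinAt (fun t => H (t * s) * t ^ (-μ))
        (t ^ (-μ - 1) * (h (t * s) * (t * s) - μ * H (t * s)))
        (interior (Set.Ioi (0:ℝ))) t := by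
    intro t ht
    rw [hint] at ht
    have ht' : (0:ℝ) < t := ht
    have d1 : HasDerivAt (fun t => H (t * s)) (h (t * s) * s) t := by
      have := (stmt_11_hasDerivAt h H hcont hH (t * s)).comp t
        ((hasDerivAt_id t).mul_const s)
      simp at this; exact this
    have d2 : HasDerivAt (fun t : ℝ => t ^ (-μ)) (-μ * t ^ (-μ - 1)) t :=
      Real.hasDerivAt_rpow_const (Or.inl ht'.ne')
    have := d1.mul d2
    apply HasDerivAt.hasDerivWithinAt
    refine this.congr_deriv ?_
    have htpow : t ^ (-μ) = t ^ (-μ - 1) * t := by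
      rw [← Real.rpow_add_one ht'.ne']; ring_nf
    rw [htpow]; ring
  have cont : ContinuousOn (fun t => H (t * s) * t ^ (-μ)) (Set.Ioi (0:ℝ)) := by
    intro t ht
    exact (((stmt_11_hasDerivAt h H hcont hH (t * s)).comp t
      ((hasDerivAt_id t).mul_const s)).continuousAt.mul
      ((Real.continuousAt_rpow_const t (-μ) (Or.inl (ne_of_gt ht))))).continuousWithinAt
  refine monotoneOn_of_hasDerivWithinAt_nonneg (convex_Ioi 0) cont key ?_
  intro t ht
  rw [hint] at ht
  have ht' : (0:ℝ) < t := ht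
  have hts : t * s ≠ 0 := mul_ne_zero ht'.ne' hs
  have h1 : μ * H (t * s) ≤ h (t * s) * (t * s) := hb _ hts
  have h2 : (0:ℝ) < t ^ (-μ - 1) := Real.rpow_pos_of_pos ht' _
  nlinarith

/-- Homogeneity-type bounds on `H` derived from the Ambrosetti–Rabinowitz-type
condition `0 < μ₁ H(t) ≤ h(t)t ≤ μ₂ H(t)` for `t ≠ 0`. -/
theorem stmt_11 (h H : ℝ → ℝ) (hcont : Continuous h)
    (hH : ∀ t : ℝ, H t = ∫ τ in (0:ℝ)..t, h τ)
    (μ₁ μ₂ : ℝ) (hμ₁ : 0 < μ₁) (hμ : μ₁ ≤ μ₂)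
    (hgrowth : ∀ t : ℝ, t ≠ 0 →
      0 < μ₁ * H t ∧ μ₁ * H t ≤ h t * t ∧ h t * t ≤ μ₂ * H t) :
    ∀ s : ℝ,
      (∀ t : ℝ, t ∈ Set.Icc (0:ℝ) 1 →
        t ^ μ₂ * H s ≤ H (t * s) ∧ H (t * s) ≤ t ^ μ₁ * H s)
      ∧ (∀ t : ℝ, 1 ≤ t →
        t ^ μ₁ * H s ≤ H (t * s) ∧ H (t * s) ≤ t ^ μ₂ * H s) := by
  have hμ₂ : 0 < μ₂ := lt_of_lt_of_le hμ₁ hμ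
  have hH0 : H 0 = 0 := by rw [hH]; simp
  intro s
  by_cases hs : s = 0
  · subst hs
    simp only [mul_zero, hH0]
    constructor <;> intro t _ <;> simp
  -- s ≠ 0
  have g1 : MonotoneOn (fun t => H (t * s) * t ^ (-μ₁)) (Set.Ioi (0:ℝ)) :=
    stmt_11_mono h H hcont hH s hs μ₁ hμ₁ (fun t ht => (hgrowth t ht).2.1)
  have g2 : MonotoneOn (fun t => (-H) (t * s) * t ^ (-μ₂)) (Set.Ioi (0:ℝ)) := by
    apply stmt_11_mono (fun x => -h x) (-H) hcont.neg
    · intro t; simp [hH t, intervalIntegral.integral_neg]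
    · exact hs
    · exact hμ₂
    · intro t ht
      have := (hgrowth t ht).2.2
      simp only [Pi.neg_apply]
      nlinarith
  -- key conversion
  have conv : ∀ t : ℝ, 0 < t → ∀ μ : ℝ,
      (H (t * s) * t ^ (-μ) ≤ H s ↔ H (t * s) ≤ t ^ μ * H s) := by
    intro t ht μ
    have hp : (0:ℝ) < t ^ μ := Real.rpow_pos_of_pos ht μ
    rw [Real.rpow_neg ht.le, ← div_eq_mul_inv, div_le_iff₀ hp]
    constructor <;> intro h <;> linarith [h]
  have conv' : ∀ t : ℝ, 0 < t → ∀ μ : ℝ,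
      (H s ≤ H (t * s) * t ^ (-μ) ↔ t ^ μ * H s ≤ H (t * s)) := by
    intro t ht μ
    have hp : (0:ℝ) < t ^ μ := Real.rpow_pos_of_pos ht μ
    rw [Real.rpow_neg ht.le, ← div_eq_mul_inv, le_div_iff₀ hp]
    constructor <;> intro h <;> linarith [h]
  constructor
  · intro t ⟨ht0, ht1⟩
    rcases eq_or_lt_of_le ht0 with rfl | ht0
    · rw [zero_mul, hH0, Real.zero_rpow hμ₂.ne', Real.zero_rpow hμ₁.ne']
      simp
    · have ht : t ∈ Set.Ioi (0:ℝ) := ht0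
      have h1 : (1:ℝ) ∈ Set.Ioi (0:ℝ) := Set.mem_Ioi.mpr one_pos
      have e1 := g1 ht h1 ht1
      have e2 := g2 ht h1 ht1
      simp only [one_mul, Real.one_rpow, mul_one, Pi.neg_apply] at e1 e2
      constructor
      · rw [← conv' t ht0 μ₂]; linarith
      · rw [← conv t ht0 μ₁]; linarith
  · intro t ht1
    have ht0 : (0:ℝ) < t := lt_of_lt_of_le one_pos ht1
    have ht : t ∈ Set.Ioi (0:ℝ) := ht0
    have h1 : (1:ℝ) ∈ Set.Ioi (0:ℝ) := Set.mem_Ioi.mpr one_pos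
    have e1 := g1 h1 ht ht1
    have e2 := g2 h1 ht ht1
    simp only [one_mul, Real.one_rpow, mul_one, Pi.neg_apply] at e1 e2
    constructor
    · rw [← conv' t ht0 μ₁]; linarith
    · rw [← conv t ht0 μ₂]; linarith
end

section
/- Let N ≥ 2 be an integer, let h : ℝ → ℝ be continuous with H(t) = ∫_0^t h(τ) dτ, and suppose there are real numbers μ₁, μ₂ with 4 + 4/N < μ₁ ≤ μ₂ such that 0 < μ₁ H(t) ≤ h(t)t ≤ μ₂ H(t) for all t ≠ 0. Then for every ε > 0 there exists C_ε > 0 such that max{h(t)t, H(t)} ≤ ε|t|^(4+4/N) + C_ε|t|^(μ₂) for all t ∈ ℝ. -/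
lemma aux_mono (G g : ℝ → ℝ) (μ : ℝ)
    (hd : ∀ t : ℝ, 0 < t → HasDerivAt G (g t) t)
    (hlow : ∀ t : ℝ, 0 < t → μ * G t ≤ g t * t) :
    MonotoneOn (fun t => G t * t ^ (-μ)) (Set.Ioi (0:ℝ)) := by
  apply monotoneOn_of_deriv_nonneg (convex_Ioi 0)
  · intro x hx
    have hx0 : (0:ℝ) < x := hx
    exact ((hd x hx0).mul (Real.hasDerivAt_rpow_const
      (Or.inl hx0.ne'))).continuousAt.continuousWithinAt
  · intro x hx
    rw [interior_Ioi] at hx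
    exact ((hd x hx).mul (Real.hasDerivAt_rpow_const
      (Or.inl (ne_of_gt hx)))).differentiableAt.differentiableWithinAt
  · intro x hx
    rw [interior_Ioi] at hx
    have hx0 : (0:ℝ) < x := hx
    have hder : HasDerivAt (fun t => G t * t ^ (-μ))
        (g x * x ^ (-μ) + G x * (-μ * x ^ (-μ - 1))) x :=
      (hd x hx0).mul (Real.hasDerivAt_rpow_const (Or.inl hx0.ne'))
    rw [hder.deriv]
    have hsplit : x ^ (-μ) = x * x ^ (-μ - 1) := by
      conv_lhs => rw [show (-μ) = 1 + (-μ - 1) by ring, Real.rpow_add hx0, Real.rpow_one]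
    have hpos : (0:ℝ) < x ^ (-μ - 1) := Real.rpow_pos_of_pos hx0 _
    have := hlow x hx0
    rw [hsplit]
    nlinarith

lemma aux_bound (G g : ℝ → ℝ) (μ₁ μ₂ : ℝ)
    (hd : ∀ t : ℝ, 0 < t → HasDerivAt G (g t) t)
    (hg : ∀ t : ℝ, 0 < t → μ₁ * G t ≤ g t * t ∧ g t * t ≤ μ₂ * G t) :
    (∀ t : ℝ, 0 < t → t ≤ 1 → G t ≤ G 1 * t ^ μ₁) ∧
    (∀ t : ℝ, 1 ≤ t → G t ≤ G 1 * t ^ μ₂) := by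
  have M1 := aux_mono G g μ₁ hd (fun t ht => (hg t ht).1)
  have M2 := aux_mono (fun t => -G t) (fun t => -g t) μ₂
    (fun t ht => (hd t ht).neg) (fun t ht => by have := (hg t ht).2; nlinarith)
  constructor
  · intro t ht ht1
    have key := M1 (Set.mem_Ioi.mpr ht) (Set.mem_Ioi.mpr one_pos) ht1
    simp only [Real.one_rpow, mul_one] at key
    rw [Real.rpow_neg ht.le, ← div_eq_mul_inv] at key
    exact (div_le_iff₀ (Real.rpow_pos_of_pos ht _)).mp key
  · intro t ht1
    have ht : (0:ℝ) < t := lt_of_lt_of_le one_pos ht1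
    have key := M2 (Set.mem_Ioi.mpr one_pos) (Set.mem_Ioi.mpr ht) ht1
    simp only [Real.one_rpow, mul_one, neg_mul, neg_le_neg_iff] at key
    rw [Real.rpow_neg ht.le, ← div_eq_mul_inv] at key
    exact (div_le_iff₀ (Real.rpow_pos_of_pos ht _)).mp key

/-- The growth estimate `max{h(t)t, H(t)} ≤ ε|t|^(4+4/N) + C_ε|t|^(μ₂)`. -/
theorem stmt_12 (N : ℕ) (hN : 2 ≤ N) (h H : ℝ → ℝ) (hcont : Continuous h)
    (hH : ∀ t : ℝ, H t = ∫ τ in (0:ℝ)..t, h τ)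
    (μ₁ μ₂ : ℝ) (hμ₁ : 4 + 4 / (N:ℝ) < μ₁) (hμ : μ₁ ≤ μ₂)
    (hgrowth : ∀ t : ℝ, t ≠ 0 →
      0 < μ₁ * H t ∧ μ₁ * H t ≤ h t * t ∧ h t * t ≤ μ₂ * H t) :
    ∀ ε : ℝ, 0 < ε → ∃ C : ℝ, 0 < C ∧ ∀ t : ℝ,
      max (h t * t) (H t) ≤ ε * |t| ^ ((4:ℝ) + 4 / (N:ℝ)) + C * |t| ^ μ₂ := by
  intro ε hε
  have hNpos : (0:ℝ) < (N:ℝ) := by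
    have : (0:ℕ) < N := lt_of_lt_of_le (by norm_num) hN
    exact_mod_cast this
  set p : ℝ := 4 + 4 / (N:ℝ) with hp_def
  have hp_pos : 0 < p := by
    have : 0 < 4 / (N:ℝ) := by positivity
    simp only [hp_def]; linarith
  have hpμ₁ : p < μ₁ := hμ₁
  have hp4 : (4:ℝ) < p := by
    have : 0 < 4 / (N:ℝ) := by positivity
    simp only [hp_def]; linarith
  have hμ₁pos : 0 < μ₁ := lt_trans hp_pos hpμ₁
  have hμ₂1 : (1:ℝ) ≤ μ₂ := by linarith [hp4]
  have hμ₂pos : 0 < μ₂ := by linarith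
  -- derivative of H
  have hder : ∀ t : ℝ, HasDerivAt H (h t) t := by
    intro t
    exact ((hcont.integral_hasStrictDerivAt 0 t).hasDerivAt).congr_of_eventuallyEq
      (Filter.Eventually.of_forall hH)
  -- bounds on the positive side
  have B1 := aux_bound H h μ₁ μ₂ (fun t _ => hder t)
    (fun t ht => ⟨(hgrowth t ht.ne').2.1, (hgrowth t ht.ne').2.2⟩)
  -- bounds on the negative side : G s = H (-s)
  have hderG : ∀ s : ℝ, 0 < s → HasDerivAt (fun s => H (-s)) (-h (-s)) s := by
    intro s _
    have := (hder (-s)).comp s (hasDerivAt_neg s)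
    simpa [mul_comm, Function.comp_def] using this
  have B2 := aux_bound (fun s => H (-s)) (fun s => -h (-s)) μ₁ μ₂ hderG
    (fun s hs => by
      have hg := hgrowth (-s) (by simpa using hs.ne')
      constructor
      · have := hg.2.1; nlinarith
      · have := hg.2.2; nlinarith)
  -- positivity of H away from 0
  have hHpos : ∀ t : ℝ, t ≠ 0 → 0 < H t := by
    intro t ht
    have := (hgrowth t ht).1
    nlinarith
  set A : ℝ := max (H 1) (H (-1)) with hA_def
  have hApos : 0 < A := lt_max_of_lt_left (hHpos 1 one_ne_zero)
  -- unified bounds in terms of |t|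
  have hsmall : ∀ t : ℝ, t ≠ 0 → |t| ≤ 1 → H t ≤ A * |t| ^ μ₁ := by
    intro t ht ht1
    rcases lt_or_gt_of_ne ht with htn | htp
    · have habs : |t| = -t := abs_of_neg htn
      have := B2.1 (-t) (by linarith) (by linarith [le_of_abs_le ht1, habs.symm.le]; )
      simp only [neg_neg] at this
      calc H t ≤ H (-1) * (-t) ^ μ₁ := by simpa [habs] using this
        _ ≤ A * |t| ^ μ₁ := by
            rw [habs]
            exact mul_le_mul_of_nonneg_right (le_max_right _ _)
              (Real.rpow_nonneg (by linarith) _)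
    · have habs : |t| = t := abs_of_pos htp
      have := B1.1 t htp (by rwa [habs] at ht1)
      calc H t ≤ H 1 * t ^ μ₁ := this
        _ ≤ A * |t| ^ μ₁ := by
            rw [habs]
            exact mul_le_mul_of_nonneg_right (le_max_left _ _)
              (Real.rpow_nonneg htp.le _)
  have hlarge : ∀ t : ℝ, 1 ≤ |t| → H t ≤ A * |t| ^ μ₂ := by
    intro t ht1
    have ht : t ≠ 0 := by intro hc; rw [hc] at ht1; simp at ht1; linarith
    rcases lt_or_gt_of_ne ht with htn | htp
    · have habs : |t| = -t := abs_of_neg htn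
      have := B2.2 (-t) (by rw [habs] at ht1; linarith)
      simp only [neg_neg] at this
      calc H t ≤ H (-1) * (-t) ^ μ₂ := by simpa using this
        _ ≤ A * |t| ^ μ₂ := by
            rw [habs]
            exact mul_le_mul_of_nonneg_right (le_max_right _ _)
              (Real.rpow_nonneg (by linarith) _)
    · have habs : |t| = t := abs_of_pos htp
      have := B1.2 t (by rwa [habs] at ht1)
      calc H t ≤ H 1 * t ^ μ₂ := this
        _ ≤ A * |t| ^ μ₂ := by
            rw [habs]
            exact mul_le_mul_of_nonneg_right (le_max_left _ _)
              (Real.rpow_nonneg htp.le _)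
  -- choice of δ and C
  set B : ℝ := μ₂ * A with hB_def
  have hBpos : 0 < B := mul_pos hμ₂pos hApos
  set q : ℝ := μ₁ - p with hq_def
  have hqpos : 0 < q := by simp only [hq_def]; linarith
  set δ : ℝ := min 1 ((ε / B) ^ (1 / q)) with hδ_def
  have hrpos : 0 < ε / B := div_pos hε hBpos
  have hδpos : 0 < δ := lt_min one_pos (Real.rpow_pos_of_pos hrpos _)
  have hδ1 : δ ≤ 1 := min_le_left _ _
  have hδq : B * δ ^ q ≤ ε := by
    have h1 : δ ^ q ≤ ((ε / B) ^ (1 / q)) ^ q :=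
      Real.rpow_le_rpow hδpos.le (min_le_right _ _) hqpos.le
    have h2 : ((ε / B) ^ (1 / q)) ^ q = ε / B := by
      rw [← Real.rpow_mul hrpos.le, one_div, inv_mul_cancel₀ hqpos.ne', Real.rpow_one]
    rw [h2] at h1
    calc B * δ ^ q ≤ B * (ε / B) := mul_le_mul_of_nonneg_left h1 hBpos.le
      _ = ε := by field_simp
  refine ⟨B * δ ^ (μ₁ - μ₂), by positivity, ?_⟩
  intro t
  rcases eq_or_ne t 0 with rfl | ht
  · have hH0 : H 0 = 0 := by rw [hH 0, intervalIntegral.integral_same]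
    simp [hH0, Real.zero_rpow hp_pos.ne', Real.zero_rpow (by positivity : (0:ℝ) < μ₂).ne']
  · have hu : 0 < |t| := abs_pos.mpr ht
    have hHt : 0 < H t := hHpos t ht
    have step1 : max (h t * t) (H t) ≤ μ₂ * H t :=
      max_le (hgrowth t ht).2.2 (by nlinarith)
    have hC1 : (1:ℝ) ≤ δ ^ (μ₁ - μ₂) :=
      Real.one_le_rpow_of_pos_of_le_one_of_nonpos hδpos hδ1 (by linarith)
    refine le_trans step1 ?_
    rcases le_or_gt |t| 1 with hle1 | hgt1
    · have hsm := hsmall t ht hle1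
      rcases le_or_gt |t| δ with hleδ | hgtδ
      · -- small region: ε term dominates
        have hsplit : |t| ^ μ₁ = |t| ^ q * |t| ^ p := by
          rw [← Real.rpow_add hu]
          congr 1
          simp only [hq_def]; ring
        have huq : |t| ^ q ≤ δ ^ q := Real.rpow_le_rpow hu.le hleδ hqpos.le
        have hp0 : 0 ≤ |t| ^ p := Real.rpow_nonneg hu.le _
        have : μ₂ * H t ≤ ε * |t| ^ p := by
          calc μ₂ * H t ≤ μ₂ * (A * |t| ^ μ₁) :=
                mul_le_mul_of_nonneg_left hsm hμ₂pos.le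
            _ = B * |t| ^ q * |t| ^ p := by rw [hsplit]; ring
            _ ≤ B * δ ^ q * |t| ^ p := by
                exact mul_le_mul_of_nonneg_right
                  (mul_le_mul_of_nonneg_left huq hBpos.le) hp0
            _ ≤ ε * |t| ^ p := mul_le_mul_of_nonneg_right hδq hp0
        have hnn : 0 ≤ B * δ ^ (μ₁ - μ₂) * |t| ^ μ₂ := by positivity
        linarith
      · -- middle region
        have hsplit : |t| ^ μ₁ = |t| ^ (μ₁ - μ₂) * |t| ^ μ₂ := by
          rw [← Real.rpow_add hu]; congr 1; ring
        have huq : |t| ^ (μ₁ - μ₂) ≤ δ ^ (μ₁ - μ₂) :=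
          Real.rpow_le_rpow_of_nonpos hδpos hgtδ.le (by linarith)
        have hp0 : 0 ≤ |t| ^ μ₂ := Real.rpow_nonneg hu.le _
        have : μ₂ * H t ≤ B * δ ^ (μ₁ - μ₂) * |t| ^ μ₂ := by
          calc μ₂ * H t ≤ μ₂ * (A * |t| ^ μ₁) :=
                mul_le_mul_of_nonneg_left hsm hμ₂pos.le
            _ = B * |t| ^ (μ₁ - μ₂) * |t| ^ μ₂ := by rw [hsplit]; ring
            _ ≤ B * δ ^ (μ₁ - μ₂) * |t| ^ μ₂ :=
                mul_le_mul_of_nonneg_right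
                  (mul_le_mul_of_nonneg_left huq hBpos.le) hp0
        have hnn : 0 ≤ ε * |t| ^ p := by positivity
        linarith
    · -- large region
      have hlg := hlarge t hgt1.le
      have hp0 : 0 ≤ |t| ^ μ₂ := Real.rpow_nonneg hu.le _
      have : μ₂ * H t ≤ B * δ ^ (μ₁ - μ₂) * |t| ^ μ₂ := by
        calc μ₂ * H t ≤ μ₂ * (A * |t| ^ μ₂) :=
              mul_le_mul_of_nonneg_left hlg hμ₂pos.le
          _ = B * |t| ^ μ₂ := by ring
          _ ≤ B * δ ^ (μ₁ - μ₂) * |t| ^ μ₂ :=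
              mul_le_mul_of_nonneg_right (le_mul_of_one_le_right hBpos.le hC1) hp0
      have hnn : 0 ≤ ε * |t| ^ p := by positivity
      linarith
end
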